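/- arXiv:2501.19175 — 3 statements merged into one kernel-verified Lean document; each statement's English description precedes it below -/
import Mathlib

section
/- Under the assumptions on c as above, there exists C > 0 such that |φ^z(x) − x − (φ^z(y) − y)| ≤ C |z| e^{‖Dc‖|z|} |x − y| for all x, y ∈ ℝ^d and z ∈ ℝ^m; i.e., the map φ^z − Id has Lipschitz constant at most C|z|e^{‖Dc‖|z|}. -/
open Real Set

theorem stmt3 (d m : ℕ)
    (c : EuclideanSpace ℝ (Fin d) → (EuclideanSpace ℝ (Fin m) →L[ℝ] EuclideanSpace ℝ (Fin d)))
    (hc : ContDiff ℝ 1 c)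
    (Kc : ℝ) (hKc : 0 ≤ Kc)
    (hDc : ∀ x z, ‖fderiv ℝ (fun y => c y z) x‖ ≤ Kc * ‖z‖)
    (φ : EuclideanSpace ℝ (Fin m) → ℝ → EuclideanSpace ℝ (Fin d) → EuclideanSpace ℝ (Fin d))
    (hφ0 : ∀ z x, φ z 0 x = x)
    (hφ : ∀ z x, ∀ u ∈ Icc (0:ℝ) 1, HasDerivAt (fun v => φ z v x) (c (φ z u x) z) u) :
    ∃ C > 0, ∀ x y z,
      ‖(φ z 1 x - x) - (φ z 1 y - y)‖ ≤ C * ‖z‖ * exp (Kc * ‖z‖) * ‖x - y‖ := by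
  refine ⟨Kc + 1, by linarith, fun x y z => ?_⟩
  set K := Kc * ‖z‖ with hK
  have hK0 : 0 ≤ K := mul_nonneg hKc (norm_nonneg z)
  have hdiff : Differentiable ℝ (fun x => c x z) :=
    (hc.differentiable one_ne_zero).clm_apply (differentiable_const z)
  have hlip : ∀ a b, ‖c a z - c b z‖ ≤ K * ‖a - b‖ := by
    intro a b
    exact convex_univ.norm_image_sub_le_of_norm_fderiv_le
      (fun x _ => (hdiff x)) (fun x _ => hDc x z) (mem_univ b) (mem_univ a)
  have hcont : ∀ w, ContinuousOn (fun u => φ z u w) (Icc 0 1) :=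
    fun w u hu => ((hφ z w u hu).continuousAt).continuousWithinAt
  have hgron : ∀ u ∈ Icc (0:ℝ) 1, ‖φ z u x - φ z u y‖ ≤ ‖x - y‖ * exp (K * u) := by
    intro u hu
    have := norm_le_gronwallBound_of_norm_deriv_right_le
      (f := fun u => φ z u x - φ z u y)
      (f' := fun u => c (φ z u x) z - c (φ z u y) z)
      (a := 0) (b := 1) (δ := ‖x - y‖) (K := K) (ε := 0)
      ((hcont x).sub (hcont y))
      (fun t ht => ((hφ z x t (Ico_subset_Icc_self ht)).sub
        (hφ z y t (Ico_subset_Icc_self ht))).hasDerivWithinAt)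
      (by simp [hφ0])
      (fun t ht => by simpa using hlip (φ z t x) (φ z t y))
      u hu
    simpa [gronwallBound_ε0] using this
  have hbound : ∀ u ∈ Icc (0:ℝ) 1,
      ‖c (φ z u x) z - c (φ z u y) z‖ ≤ K * exp K * ‖x - y‖ := by
    intro u hu
    calc ‖c (φ z u x) z - c (φ z u y) z‖ ≤ K * ‖φ z u x - φ z u y‖ := hlip _ _
      _ ≤ K * (‖x - y‖ * exp (K * u)) :=
          mul_le_mul_of_nonneg_left (hgron u hu) hK0
      _ ≤ K * exp K * ‖x - y‖ := by
          have he : exp (K * u) ≤ exp K := by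
            apply Real.exp_le_exp.mpr
            nlinarith [hu.1, hu.2]
          have h1 : ‖x - y‖ * exp (K * u) ≤ ‖x - y‖ * exp K :=
            mul_le_mul_of_nonneg_left he (norm_nonneg _)
          calc K * (‖x - y‖ * exp (K * u)) ≤ K * (‖x - y‖ * exp K) :=
                mul_le_mul_of_nonneg_left h1 hK0
            _ = K * exp K * ‖x - y‖ := by ring
  have hmv := (convex_Icc (0:ℝ) 1).norm_image_sub_le_of_norm_hasDerivWithin_le
    (f := fun u => (φ z u x - x) - (φ z u y - y))
    (f' := fun u => c (φ z u x) z - c (φ z u y) z)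
    (fun u hu => (((hφ z x u hu).sub_const x).sub
      ((hφ z y u hu).sub_const y)).hasDerivWithinAt)
    hbound (left_mem_Icc.mpr zero_le_one) (right_mem_Icc.mpr zero_le_one)
  simp only [hφ0, sub_self, sub_zero] at hmv
  have : ‖(φ z 1 x - x) - (φ z 1 y - y)‖ ≤ K * exp K * ‖x - y‖ := by
    simpa using hmv
  refine this.trans ?_
  have hKle : K ≤ (Kc + 1) * ‖z‖ := by
    rw [hK]; nlinarith [norm_nonneg z]
  have := mul_le_mul_of_nonneg_right (mul_le_mul_of_nonneg_right hKle (exp_pos K).le)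
    (norm_nonneg (x - y))
  linarith
end

section
/- Let c : ℝ^d → ℝ^{d×m} be C^2 with bounded first derivative and with the products c^i_j · ∂^α c^k_l bounded for |α| = 2. Then there exists C > 0 such that the one-step Taylor remainder of the Marcus flow satisfies |φ^z(x) − x − c(x)z| ≤ C |z|^2 e^{‖Dc‖|z|} (1 + |x|) for all x ∈ ℝ^d, z ∈ ℝ^m. -/
open Real Set

lemma gb_le_aux (K ε t : ℝ) (hK : 0 ≤ K) (hε : 0 ≤ ε) (ht : 0 ≤ t) :
    gronwallBound 0 K ε t ≤ ε * t * Real.exp (K * t) := by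
  rcases eq_or_lt_of_le hK with h | h
  · rw [← h, gronwallBound_K0]
    simp only [zero_add, zero_mul, Real.exp_zero, mul_one]
    exact le_refl _
  · rw [gronwallBound_of_K_ne_0 (ne_of_gt h)]
    have h1 : -(K * t) + 1 ≤ Real.exp (-(K * t)) := Real.add_one_le_exp _
    have h2 : Real.exp (-(K * t)) * Real.exp (K * t) = 1 := by
      rw [← Real.exp_add]; simp
    have h3 : Real.exp (K * t) - 1 ≤ K * t * Real.exp (K * t) := by
      nlinarith [Real.exp_pos (K * t)]
    have h4 : 0 ≤ ε / K := div_nonneg hε h.le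
    have := mul_le_mul_of_nonneg_left h3 h4
    calc 0 * Real.exp (K * t) + ε / K * (Real.exp (K * t) - 1)
        ≤ ε / K * (K * t * Real.exp (K * t)) := by linarith
      _ = ε * t * Real.exp (K * t) := by field_simp

theorem stmt4 (d m : ℕ)
    (c : EuclideanSpace ℝ (Fin d) → (EuclideanSpace ℝ (Fin m) →L[ℝ] EuclideanSpace ℝ (Fin d)))
    (hc : ContDiff ℝ 2 c)
    (Kc : ℝ) (hKc : 0 ≤ Kc)
    (hDc : ∀ x z, ‖fderiv ℝ (fun y => c y z) x‖ ≤ Kc * ‖z‖)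
    (M₂ : ℝ) (hM₂ : ∀ x, ‖iteratedFDeriv ℝ 2 c x‖ ≤ M₂)
    (Mprod : ℝ) (hMprod : ∀ x, ‖c x‖ * ‖iteratedFDeriv ℝ 2 c x‖ ≤ Mprod)
    (φ : EuclideanSpace ℝ (Fin m) → ℝ → EuclideanSpace ℝ (Fin d) → EuclideanSpace ℝ (Fin d))
    (hφ0 : ∀ z x, φ z 0 x = x)
    (hφ : ∀ z x, ∀ u ∈ Icc (0:ℝ) 1, HasDerivAt (fun v => φ z v x) (c (φ z u x) z) u) :
    ∃ C > 0, ∀ x z,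
      ‖φ z 1 x - x - c x z‖ ≤ C * ‖z‖ ^ 2 * exp (Kc * ‖z‖) * (1 + ‖x‖) := by
  refine ⟨Kc * (‖c 0‖ + Kc) + 1, by positivity, fun x z => ?_⟩
  set K : ℝ := Kc * ‖z‖ with hKdef
  have hKnn : 0 ≤ K := by positivity
  -- Lipschitz bound for y ↦ c y z
  have hdiff : ∀ y, DifferentiableAt ℝ (fun y => c y z) y := fun y =>
    ((hc.differentiable two_ne_zero) y).clm_apply (differentiableAt_const z)
  have hlip : ∀ a b : EuclideanSpace ℝ (Fin d), ‖c b z - c a z‖ ≤ K * ‖b - a‖ := by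
    intro a b
    have := (convex_univ : Convex ℝ (univ : Set (EuclideanSpace ℝ (Fin d)))).norm_image_sub_le_of_norm_fderiv_le
      (fun y _ => hdiff y) (fun y _ => hDc y z) (mem_univ a) (mem_univ b)
    simpa using this
  have hcb : ∀ y : EuclideanSpace ℝ (Fin d), ‖c y z‖ ≤ ‖c 0‖ * ‖z‖ + K * ‖y‖ := by
    intro y
    have h1 : ‖c y z - c 0 z‖ ≤ K * ‖y‖ := by simpa using hlip 0 y
    have h2 : ‖c 0 z‖ ≤ ‖c 0‖ * ‖z‖ := (c 0).le_opNorm z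
    calc ‖c y z‖ = ‖c 0 z + (c y z - c 0 z)‖ := congrArg norm (by abel)
      _ ≤ ‖c 0 z‖ + ‖c y z - c 0 z‖ := norm_add_le _ _
      _ ≤ ‖c 0‖ * ‖z‖ + K * ‖y‖ := add_le_add h2 h1
  set ε : ℝ := ‖c 0‖ * ‖z‖ + K * ‖x‖ with hεdef
  have hεnn : 0 ≤ ε := by positivity
  have hφcont : ContinuousOn (fun u => φ z u x) (Icc (0:ℝ) 1) := fun u hu =>
    (hφ z x u hu).continuousAt.continuousWithinAt
  -- inner Gronwall: bound ‖φ z u x - x‖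
  have inner : ∀ u ∈ Icc (0:ℝ) 1, ‖φ z u x - x‖ ≤ ε * Real.exp K := by
    have hg := norm_le_gronwallBound_of_norm_deriv_right_le
      (f := fun u => φ z u x - x) (f' := fun u => c (φ z u x) z) (δ := 0) (K := K) (ε := ε)
      (a := 0) (b := 1)
      (hφcont.sub continuousOn_const)
      (fun u hu => ((hφ z x u (Ico_subset_Icc_self hu)).sub_const x).hasDerivWithinAt)
      (by simp [hφ0])
      (fun u hu => by
        have h1 := hcb (φ z u x)
        have h2 : ‖φ z u x‖ ≤ ‖x‖ + ‖φ z u x - x‖ := by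
          simpa using norm_add_le x (φ z u x - x)
        calc ‖c (φ z u x) z‖ ≤ ‖c 0‖ * ‖z‖ + K * ‖φ z u x‖ := h1
          _ ≤ ‖c 0‖ * ‖z‖ + K * (‖x‖ + ‖φ z u x - x‖) := by nlinarith
          _ = K * ‖φ z u x - x‖ + ε := by ring)
    intro u hu
    have := hg u hu
    calc ‖φ z u x - x‖ ≤ gronwallBound 0 K ε (u - 0) := this
      _ ≤ ε * (u - 0) * Real.exp (K * (u - 0)) :=
          gb_le_aux K ε (u - 0) hKnn hεnn (by linarith [hu.1])
      _ ≤ ε * Real.exp K := by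
          have hu1 : u - 0 ≤ 1 := by linarith [hu.2]
          have hu0 : 0 ≤ u - 0 := by linarith [hu.1]
          have he : Real.exp (K * (u - 0)) ≤ Real.exp K := by
            apply Real.exp_le_exp.mpr; nlinarith
          calc ε * (u - 0) * Real.exp (K * (u - 0))
              ≤ ε * Real.exp (K * (u - 0)) :=
                mul_le_mul_of_nonneg_right (mul_le_of_le_one_right hεnn hu1)
                  (Real.exp_pos _).le
            _ ≤ ε * Real.exp K := mul_le_mul_of_nonneg_left he hεnn
  -- outer Gronwall: h u = φ z u x - x - u • (c x z)
  have outer := norm_le_gronwallBound_of_norm_deriv_right_le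
    (f := fun u => φ z u x - x - u • (c x z)) (f' := fun u => c (φ z u x) z - c x z)
    (δ := 0) (K := 0) (ε := K * (ε * Real.exp K)) (a := 0) (b := 1)
    ((hφcont.sub continuousOn_const).sub (continuousOn_id.smul continuousOn_const))
    (fun u hu => (((hφ z x u (Ico_subset_Icc_self hu)).sub_const x).sub
      ((hasDerivAt_id u).smul_const (c x z))).hasDerivWithinAt.congr_deriv (by simp))
    (by simp [hφ0])
    (fun u hu => by
      have h1 : ‖c (φ z u x) z - c x z‖ ≤ K * ‖φ z u x - x‖ := hlip x (φ z u x)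
      have h2 := inner u (Ico_subset_Icc_self hu)
      calc ‖c (φ z u x) z - c x z‖ ≤ K * (ε * Real.exp K) := by nlinarith
        _ = 0 * ‖φ z u x - x - u • (c x z)‖ + K * (ε * Real.exp K) := by ring)
  have key := outer 1 (by constructor <;> norm_num)
  rw [gronwallBound_K0] at key
  simp only [one_smul, zero_add, mul_one, sub_zero] at key
  -- conclude
  have hfin : K * (ε * Real.exp K) ≤ (Kc * (‖c 0‖ + Kc) + 1) * ‖z‖ ^ 2 * Real.exp K * (1 + ‖x‖) := by
    have hx : (0:ℝ) ≤ ‖x‖ := norm_nonneg x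
    have hz : (0:ℝ) ≤ ‖z‖ := norm_nonneg z
    have hc0 : (0:ℝ) ≤ ‖c 0‖ := norm_nonneg _
    have hexp : (0:ℝ) < Real.exp K := Real.exp_pos K
    have hinner : Kc * ‖c 0‖ + Kc ^ 2 * ‖x‖ ≤ (Kc * (‖c 0‖ + Kc) + 1) * (1 + ‖x‖) := by
      nlinarith [sq_nonneg Kc, mul_nonneg (mul_nonneg hKc hc0) hx]
    have h1 : K * ε ≤ (Kc * (‖c 0‖ + Kc) + 1) * ‖z‖ ^ 2 * (1 + ‖x‖) := by
      calc K * ε = ‖z‖ ^ 2 * (Kc * ‖c 0‖ + Kc ^ 2 * ‖x‖) := by rw [hKdef, hεdef, hKdef]; ring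
        _ ≤ ‖z‖ ^ 2 * ((Kc * (‖c 0‖ + Kc) + 1) * (1 + ‖x‖)) :=
            mul_le_mul_of_nonneg_left hinner (sq_nonneg _)
        _ = (Kc * (‖c 0‖ + Kc) + 1) * ‖z‖ ^ 2 * (1 + ‖x‖) := by ring
    calc K * (ε * Real.exp K) = K * ε * Real.exp K := by ring
      _ ≤ (Kc * (‖c 0‖ + Kc) + 1) * ‖z‖ ^ 2 * (1 + ‖x‖) * Real.exp K :=
          mul_le_mul_of_nonneg_right h1 hexp.le
      _ = (Kc * (‖c 0‖ + Kc) + 1) * ‖z‖ ^ 2 * Real.exp K * (1 + ‖x‖) := by ring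
  calc ‖φ z 1 x - x - c x z‖ ≤ K * (ε * Real.exp K) := key
    _ ≤ _ := hfin
end

section
/- Let c be C^2 with bounded first derivative and with c^i_j · ∂^α c^k_l bounded for |α| = 2, and assume ∫_{0<|z|≤1}|z|^2 ν(dz) < ∞ and ∫_{|z|>1} e^{(‖Dc‖+ε)|z|} ν(dz) < ∞. Then the drift correction map x ↦ ∫_{|z|>0} (φ^z(x) − x − c(x)z) ν(dz) is well-defined and globally Lipschitz continuous on ℝ^d. -/
open Real Set MeasureTheory
open Filter Topology

section Aux
variable {E F : Type*} [NormedAddCommGroup E] [NormedSpace ℝ E]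
  [NormedAddCommGroup F] [NormedSpace ℝ F]
variable {c : E → F →L[ℝ] E} {Kc : ℝ}

/-- The quadratic vector field `b(w,z) = D(c(·)z)(w) (c(w)z)`. -/
noncomputable def bb (c : E → F →L[ℝ] E) (w : E) (z : F) : E := (fderiv ℝ c w (c w z)) z

lemma hder1 (hc : ContDiff ℝ 2 c) (z : F) (w : E) :
    HasFDerivAt (fun y => c y z) ((fderiv ℝ c w).flip z) w := by
  have h := ((hc.differentiable two_ne_zero w).hasFDerivAt).clm_apply (hasFDerivAt_const z w)
  simpa using h

lemma flip_le (hc : ContDiff ℝ 2 c)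
    (hDc : ∀ x z, ‖fderiv ℝ (fun y => c y z) x‖ ≤ Kc * ‖z‖) (w : E) (z : F) :
    ‖(fderiv ℝ c w).flip z‖ ≤ Kc * ‖z‖ := by
  rw [← (hder1 hc z w).fderiv]
  exact hDc w z

lemma capp_le (hc : ContDiff ℝ 2 c)
    (hDc : ∀ x z, ‖fderiv ℝ (fun y => c y z) x‖ ≤ Kc * ‖z‖) (w v : E) (z : F) :
    ‖(fderiv ℝ c w v) z‖ ≤ Kc * ‖z‖ * ‖v‖ := by
  have h := ((fderiv ℝ c w).flip z).le_opNorm v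
  rw [ContinuousLinearMap.flip_apply] at h
  exact h.trans (mul_le_mul_of_nonneg_right (flip_le hc hDc w z) (norm_nonneg v))

lemma cLipz (hc : ContDiff ℝ 2 c) (hKc : 0 ≤ Kc)
    (hDc : ∀ x z, ‖fderiv ℝ (fun y => c y z) x‖ ≤ Kc * ‖z‖) (a b : E) (z : F) :
    ‖c a z - c b z‖ ≤ Kc * ‖z‖ * ‖a - b‖ := by
  have hf : ∀ y ∈ (univ : Set E), HasFDerivWithinAt (fun y => c y z)
      ((fderiv ℝ c y).flip z) univ y := fun y _ => (hder1 hc z y).hasFDerivWithinAt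
  have h := convex_univ.norm_image_sub_le_of_norm_hasFDerivWithin_le hf
    (fun y _ => flip_le hc hDc y z) (mem_univ b) (mem_univ a)
  exact h

lemma cLip (hc : ContDiff ℝ 2 c) (hKc : 0 ≤ Kc)
    (hDc : ∀ x z, ‖fderiv ℝ (fun y => c y z) x‖ ≤ Kc * ‖z‖) (a b : E) :
    ‖c a - c b‖ ≤ Kc * ‖a - b‖ := by
  refine ContinuousLinearMap.opNorm_le_bound _ (by positivity) fun z => ?_
  have h := cLipz hc hKc hDc a b z
  simp only [ContinuousLinearMap.sub_apply]
  nlinarith [norm_nonneg z, norm_nonneg (a - b)]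

lemma bb_le (hc : ContDiff ℝ 2 c) (hKc : 0 ≤ Kc)
    (hDc : ∀ x z, ‖fderiv ℝ (fun y => c y z) x‖ ≤ Kc * ‖z‖) (w : E) (z : F) :
    ‖bb c w z‖ ≤ Kc * ‖c w‖ * ‖z‖ ^ 2 := by
  have h1 := capp_le hc hDc w (c w z) z
  have h2 := (c w).le_opNorm z
  have := norm_nonneg z
  have := norm_nonneg (c w)
  calc ‖bb c w z‖ ≤ Kc * ‖z‖ * ‖c w z‖ := h1
    _ ≤ Kc * ‖c w‖ * ‖z‖ ^ 2 := by
        nlinarith [mul_le_mul_of_nonneg_left h2 (mul_nonneg hKc (norm_nonneg z))]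

lemma bb_lip (hc : ContDiff ℝ 2 c) (hKc : 0 ≤ Kc)
    (hDc : ∀ x z, ‖fderiv ℝ (fun y => c y z) x‖ ≤ Kc * ‖z‖)
    {Mprod : ℝ} (hM : ∀ x, ‖c x‖ * ‖iteratedFDeriv ℝ 2 c x‖ ≤ Mprod)
    (w w' : E) (z : F) :
    ‖bb c w z - bb c w' z‖ ≤ (Mprod + Kc ^ 2) * ‖z‖ ^ 2 * ‖w - w'‖ := by
  have hM0 : 0 ≤ Mprod := le_trans (by positivity) (hM w)
  have hdiff' : Differentiable ℝ (fun y => fderiv ℝ c y) :=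
    (hc.fderiv_right (m := 1) one_add_one_eq_two.le).differentiable one_ne_zero
  set D : E → E →L[ℝ] E := fun w =>
    (((fderiv ℝ c w).comp ((fderiv ℝ c w).flip z)) +
      ((fderiv ℝ (fun y => fderiv ℝ c y) w).flip (c w z))).flip z with hDdef
  have hD : ∀ w, HasFDerivAt (fun w => bb c w z) (D w) w := by
    intro w
    have h2 : HasFDerivAt (fun y => fderiv ℝ c y) (fderiv ℝ (fun y => fderiv ℝ c y) w) w :=
      (hdiff' w).hasFDerivAt
    have h3 := h2.clm_apply (hder1 hc z w)
    have h4 := h3.clm_apply (hasFDerivAt_const z w)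
    have he : ((fderiv ℝ c w) (c w z)).comp (0 : E →L[ℝ] F) +
        (((fderiv ℝ c w).comp ((fderiv ℝ c w).flip z) +
          (fderiv ℝ (fun y => fderiv ℝ c y) w).flip (c w z))).flip z = D w := by
      simp [hDdef]
    rw [he] at h4
    exact h4
  have hbound : ∀ w, ‖D w‖ ≤ (Mprod + Kc ^ 2) * ‖z‖ ^ 2 := by
    intro w
    refine ContinuousLinearMap.opNorm_le_bound _ (by positivity) fun v => ?_
    have happ : D w v = (fderiv ℝ c w ((fderiv ℝ c w v) z)) z +
        ((fderiv ℝ (fun y => fderiv ℝ c y) w v) (c w z)) z := by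
      simp [hDdef]
    rw [happ]
    have t1 : ‖(fderiv ℝ c w ((fderiv ℝ c w v) z)) z‖ ≤ Kc ^ 2 * ‖z‖ ^ 2 * ‖v‖ := by
      have h1 := capp_le hc hDc w ((fderiv ℝ c w v) z) z
      have h2 := capp_le hc hDc w v z
      have := norm_nonneg z
      have := norm_nonneg ((fderiv ℝ c w v) z)
      nlinarith [mul_le_mul_of_nonneg_left h2 (mul_nonneg hKc (norm_nonneg z))]
    have t2 : ‖((fderiv ℝ (fun y => fderiv ℝ c y) w v) (c w z)) z‖ ≤ Mprod * ‖z‖ ^ 2 * ‖v‖ := by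
      have he2 : fderiv ℝ (fun y => fderiv ℝ c y) w v (c w z) =
          iteratedFDeriv ℝ 2 c w ![v, c w z] := by
        rw [iteratedFDeriv_two_apply]
        simp
      have h1 : ‖fderiv ℝ (fun y => fderiv ℝ c y) w v (c w z)‖ ≤
          ‖iteratedFDeriv ℝ 2 c w‖ * (‖v‖ * ‖c w z‖) := by
        rw [he2]
        have := (iteratedFDeriv ℝ 2 c w).le_opNorm ![v, c w z]
        simpa [Fin.prod_univ_two] using this
      have h2 := (fderiv ℝ (fun y => fderiv ℝ c y) w v (c w z)).le_opNorm z
      have h3 := (c w).le_opNorm z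
      have h4 := hM w
      have hz := norm_nonneg z
      have hv := norm_nonneg v
      have hcw := norm_nonneg (c w)
      have hi2 := norm_nonneg (iteratedFDeriv ℝ 2 c w)
      have hcz := norm_nonneg (c w z)
      have hop := norm_nonneg (fderiv ℝ (fun y => fderiv ℝ c y) w v (c w z))
      nlinarith [mul_le_mul_of_nonneg_right h1 hz,
        mul_le_mul_of_nonneg_right (mul_le_mul_of_nonneg_right h3 hv) hi2,
        mul_le_mul_of_nonneg_right h4 (mul_nonneg (mul_nonneg hz hz) hv)]
    calc ‖(fderiv ℝ c w ((fderiv ℝ c w v) z)) z +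
        ((fderiv ℝ (fun y => fderiv ℝ c y) w v) (c w z)) z‖
        ≤ ‖(fderiv ℝ c w ((fderiv ℝ c w v) z)) z‖ +
          ‖((fderiv ℝ (fun y => fderiv ℝ c y) w v) (c w z)) z‖ := norm_add_le _ _
      _ ≤ Kc ^ 2 * ‖z‖ ^ 2 * ‖v‖ + Mprod * ‖z‖ ^ 2 * ‖v‖ := add_le_add t1 t2
      _ = (Mprod + Kc ^ 2) * ‖z‖ ^ 2 * ‖v‖ := by ring
  have h := convex_univ.norm_image_sub_le_of_norm_hasFDerivWithin_le
    (fun y _ => (hD y).hasFDerivWithinAt) (fun y _ => hbound y) (mem_univ w') (mem_univ w)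
  exact h

end Aux

section Flow
variable {E F : Type*} [NormedAddCommGroup E] [NormedSpace ℝ E]
  [NormedAddCommGroup F] [NormedSpace ℝ F]
variable {c : E → F →L[ℝ] E} {Kc : ℝ}

lemma gb_le' {K eps t : ℝ} (hK : 0 ≤ K) (heps : 0 ≤ eps) (ht : 0 ≤ t) (ht1 : t ≤ 1) :
    gronwallBound 0 K eps t ≤ eps * Real.exp K := by
  rcases eq_or_lt_of_le hK with h0 | hKpos
  · rw [← h0, gronwallBound_K0]
    simpa using le_trans (by nlinarith) (le_mul_of_one_le_right heps (one_le_exp (le_refl 0)))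
  · rw [gronwallBound_of_K_ne_0 hKpos.ne']
    have h1 : Real.exp (K * t) ≤ Real.exp K := by
      apply Real.exp_le_exp.2; nlinarith
    have h2 : Real.exp K - 1 ≤ K * Real.exp K := by
      have := Real.add_one_le_exp (-K)
      have hp := Real.exp_pos K
      have h : (1 - K) * Real.exp K ≤ Real.exp (-K) * Real.exp K := by nlinarith
      rw [← Real.exp_add, neg_add_cancel, Real.exp_zero] at h
      nlinarith
    have h3 : eps / K * (Real.exp (K * t) - 1) ≤ eps / K * (K * Real.exp K) := by
      apply mul_le_mul_of_nonneg_left _ (by positivity)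
      nlinarith
    have h4 : eps / K * (K * Real.exp K) = eps * Real.exp K := by
      field_simp
    nlinarith


lemma poly_exp {n : ℕ} {e r : ℝ} (he : 0 < e) (hr : 0 ≤ r) :
    r ^ n ≤ ((Nat.factorial n : ℝ) / e ^ n) * Real.exp (e * r) := by
  have h := Real.pow_div_factorial_le_exp (x := e * r) (by positivity) n
  have hn : (0:ℝ) < (Nat.factorial n : ℝ) := by positivity
  rw [div_le_iff₀ hn] at h
  rw [mul_pow] at h
  rw [div_mul_eq_mul_div, le_div_iff₀ (by positivity)]
  calc r ^ n * e ^ n = e ^ n * r ^ n := by ring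
    _ ≤ Real.exp (e * r) * (Nat.factorial n : ℝ) := h
    _ = (Nat.factorial n : ℝ) * Real.exp (e * r) := by ring

/-- Displacement estimate for the flow. -/
lemma flow_disp (hc : ContDiff ℝ 2 c) (hKc : 0 ≤ Kc)
    (hDc : ∀ x z, ‖fderiv ℝ (fun y => c y z) x‖ ≤ Kc * ‖z‖)
    {x : E} {z : F} {f : ℝ → E} (hf0 : f 0 = x)
    (hf : ∀ u ∈ Icc (0:ℝ) 1, HasDerivAt f (c (f u) z) u) :
    ∀ s ∈ Icc (0:ℝ) 1, ‖f s - x‖ ≤ ‖c x‖ * ‖z‖ * Real.exp (Kc * ‖z‖) := by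
  have hcont : ContinuousOn (fun s => f s - x) (Icc 0 1) := fun u hu =>
    (((hf u hu).sub_const x).continuousAt).continuousWithinAt
  have hder : ∀ u ∈ Ico (0:ℝ) 1, HasDerivWithinAt (fun s => f s - x) (c (f u) z) (Ici u) u :=
    fun u hu => (((hf u (Ico_subset_Icc_self hu)).sub_const x)).hasDerivWithinAt
  have hbound : ∀ u ∈ Ico (0:ℝ) 1,
      ‖c (f u) z‖ ≤ Kc * ‖z‖ * ‖f u - x‖ + ‖c x‖ * ‖z‖ := by
    intro u hu
    have h2 := cLipz hc hKc hDc (f u) x z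
    have h3 := (c x).le_opNorm z
    have h4 : ‖c (f u) z‖ ≤ ‖c (f u) z - c x z‖ + ‖c x z‖ := by
      simpa using norm_add_le (c (f u) z - c x z) (c x z)
    exact h4.trans (add_le_add h2 h3)
  have h0 : ‖f 0 - x‖ ≤ 0 := by simp [hf0]
  have := norm_le_gronwallBound_of_norm_deriv_right_le hcont hder h0 hbound
  intro s hs
  have h := this s hs
  have h2 := gb_le' (K := Kc * ‖z‖) (eps := ‖c x‖ * ‖z‖) (t := s - 0)
    (by positivity) (by positivity) (by linarith [hs.1]) (by linarith [hs.2])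
  calc ‖f s - x‖ ≤ gronwallBound 0 (Kc * ‖z‖) (‖c x‖ * ‖z‖) (s - 0) := h
    _ ≤ ‖c x‖ * ‖z‖ * Real.exp (Kc * ‖z‖) := h2

/-- Two flows with the same `z`, different starting points. -/
lemma flow_diff (hc : ContDiff ℝ 2 c) (hKc : 0 ≤ Kc)
    (hDc : ∀ x z, ‖fderiv ℝ (fun y => c y z) x‖ ≤ Kc * ‖z‖)
    {x y : E} {z : F} {f g : ℝ → E} (hf0 : f 0 = x) (hg0 : g 0 = y)
    (hf : ∀ u ∈ Icc (0:ℝ) 1, HasDerivAt f (c (f u) z) u)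
    (hg : ∀ u ∈ Icc (0:ℝ) 1, HasDerivAt g (c (g u) z) u) :
    ∀ s ∈ Icc (0:ℝ) 1, ‖f s - g s‖ ≤ ‖x - y‖ * Real.exp (Kc * ‖z‖) := by
  have hcont : ContinuousOn (fun s => f s - g s) (Icc 0 1) := fun u hu =>
    (((hf u hu).sub (hg u hu)).continuousAt).continuousWithinAt
  have hder : ∀ u ∈ Ico (0:ℝ) 1, HasDerivWithinAt (fun s => f s - g s)
      (c (f u) z - c (g u) z) (Ici u) u := fun u hu =>
    (((hf u (Ico_subset_Icc_self hu)).sub (hg u (Ico_subset_Icc_self hu)))).hasDerivWithinAt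
  have hbound : ∀ u ∈ Ico (0:ℝ) 1,
      ‖c (f u) z - c (g u) z‖ ≤ Kc * ‖z‖ * ‖f u - g u‖ + 0 := by
    intro u hu
    simpa using cLipz hc hKc hDc (f u) (g u) z
  have h0 : ‖f 0 - g 0‖ ≤ ‖x - y‖ := by rw [hf0, hg0]
  have H := norm_le_gronwallBound_of_norm_deriv_right_le hcont hder h0 hbound
  intro s hs
  have h := H s hs
  rw [gronwallBound_ε0] at h
  calc ‖f s - g s‖ ≤ ‖x - y‖ * Real.exp (Kc * ‖z‖ * (s - 0)) := h
    _ ≤ ‖x - y‖ * Real.exp (Kc * ‖z‖) := by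
        apply mul_le_mul_of_nonneg_left _ (norm_nonneg _)
        apply Real.exp_le_exp.2
        have := hs.1; have := hs.2
        nlinarith [mul_nonneg hKc (norm_nonneg z)]

end Flow

section Est
variable {E F : Type*} [NormedAddCommGroup E] [NormedSpace ℝ E]
  [NormedAddCommGroup F] [NormedSpace ℝ F]
variable {c : E → F →L[ℝ] E} {Kc : ℝ}

/-- Derivative of `s ↦ c (f s) z` along a flow. -/
lemma flow_chain (hc : ContDiff ℝ 2 c) {z : F} {f : ℝ → E}
    (hf : ∀ u ∈ Icc (0:ℝ) 1, HasDerivAt f (c (f u) z) u) :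
    ∀ u ∈ Icc (0:ℝ) 1, HasDerivWithinAt (fun s => c (f s) z) (bb c (f u) z) (Icc 0 1) u := by
  intro u hu
  have h := (hder1 hc z (f u)).comp_hasDerivWithinAt u
    ((hf u hu).hasDerivWithinAt (s := Icc 0 1))
  exact h

/-- Key single-point estimate. -/
lemma est_one (hc : ContDiff ℝ 2 c) (hKc : 0 ≤ Kc)
    (hDc : ∀ x z, ‖fderiv ℝ (fun y => c y z) x‖ ≤ Kc * ‖z‖)
    {x : E} {z : F} {f : ℝ → E} (hf0 : f 0 = x)
    (hf : ∀ u ∈ Icc (0:ℝ) 1, HasDerivAt f (c (f u) z) u) :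
    ‖f 1 - x - c x z‖ ≤
      Kc * ‖z‖ ^ 2 * (‖c x‖ + Kc * (‖c x‖ * ‖z‖ * Real.exp (Kc * ‖z‖))) := by
  set C : ℝ := Kc * ‖z‖ ^ 2 * (‖c x‖ + Kc * (‖c x‖ * ‖z‖ * Real.exp (Kc * ‖z‖))) with hC
  have hC0 : 0 ≤ C := by positivity
  -- bound on ‖bb c (f s) z‖
  have hbb : ∀ s ∈ Icc (0:ℝ) 1, ‖bb c (f s) z‖ ≤ C := by
    intro s hs
    have h1 := bb_le hc hKc hDc (f s) z
    have h2 : ‖c (f s)‖ ≤ ‖c x‖ + Kc * (‖c x‖ * ‖z‖ * Real.exp (Kc * ‖z‖)) := by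
      have h3 : ‖c (f s) - c x‖ ≤ Kc * ‖f s - x‖ := cLip hc hKc hDc (f s) x
      have h4 := flow_disp hc hKc hDc hf0 hf s hs
      have h5 : ‖c (f s)‖ ≤ ‖c (f s) - c x‖ + ‖c x‖ := by
        simpa using norm_add_le (c (f s) - c x) (c x)
      have := mul_le_mul_of_nonneg_left h4 hKc
      linarith
    have hz2 : (0:ℝ) ≤ Kc * ‖z‖ ^ 2 := by positivity
    calc ‖bb c (f s) z‖ ≤ Kc * ‖c (f s)‖ * ‖z‖ ^ 2 := h1
      _ ≤ C := by rw [hC]; nlinarith [sq_nonneg ‖z‖]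
  -- estimate on ‖c (f u) z - c x z‖
  have hk : ∀ u ∈ Icc (0:ℝ) 1, ‖c (f u) z - c x z‖ ≤ C := by
    intro u hu
    have h := norm_image_sub_le_of_norm_deriv_le_segment'
      (f := fun s => c (f s) z) (f' := fun s => bb c (f s) z)
      (flow_chain hc hf) (fun s hs => hbb s (Ico_subset_Icc_self hs)) u hu
    simp only [hf0] at h
    calc ‖c (f u) z - c x z‖ ≤ C * (u - 0) := h
      _ ≤ C := by nlinarith [hu.1, hu.2]
  -- conclude via the auxiliary function H
  have hH : ∀ u ∈ Icc (0:ℝ) 1, HasDerivWithinAt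
      (fun u => f u - x - u • (c x z)) (c (f u) z - c x z) (Icc 0 1) u := by
    intro u hu
    have hsm : HasDerivAt (fun u : ℝ => u • (c x z)) (c x z) u := by
      have := (hasDerivAt_id u).smul_const (c x z)
      simpa using this
    exact (((hf u hu).sub_const x).sub hsm).hasDerivWithinAt
  have h := norm_image_sub_le_of_norm_deriv_le_segment_01'
    (f := fun u => f u - x - u • (c x z)) (f' := fun u => c (f u) z - c x z)
    hH (fun u hu => hk u (Ico_subset_Icc_self hu))
  simpa [hf0] using h

/-- Key two-point estimate. -/
lemma est_two (hc : ContDiff ℝ 2 c) (hKc : 0 ≤ Kc)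
    (hDc : ∀ x z, ‖fderiv ℝ (fun y => c y z) x‖ ≤ Kc * ‖z‖)
    {Mprod : ℝ} (hM : ∀ x, ‖c x‖ * ‖iteratedFDeriv ℝ 2 c x‖ ≤ Mprod)
    {x y : E} {z : F} {f g : ℝ → E} (hf0 : f 0 = x) (hg0 : g 0 = y)
    (hf : ∀ u ∈ Icc (0:ℝ) 1, HasDerivAt f (c (f u) z) u)
    (hg : ∀ u ∈ Icc (0:ℝ) 1, HasDerivAt g (c (g u) z) u) :
    ‖(f 1 - x - c x z) - (g 1 - y - c y z)‖ ≤
      (Mprod + Kc ^ 2) * (‖z‖ ^ 2 * Real.exp (Kc * ‖z‖)) * ‖x - y‖ := by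
  have hM0 : 0 ≤ Mprod := le_trans (by positivity) (hM x)
  set C : ℝ := (Mprod + Kc ^ 2) * (‖z‖ ^ 2 * Real.exp (Kc * ‖z‖)) * ‖x - y‖ with hC
  have hC0 : 0 ≤ C := by positivity
  -- bound the difference of the quadratic fields along the two flows
  have hbb : ∀ s ∈ Icc (0:ℝ) 1, ‖bb c (f s) z - bb c (g s) z‖ ≤ C := by
    intro s hs
    have h1 := bb_lip hc hKc hDc hM (f s) (g s) z
    have h2 := flow_diff hc hKc hDc hf0 hg0 hf hg s hs
    have h3 : (0:ℝ) ≤ (Mprod + Kc ^ 2) * ‖z‖ ^ 2 := by positivity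
    calc ‖bb c (f s) z - bb c (g s) z‖ ≤ (Mprod + Kc ^ 2) * ‖z‖ ^ 2 * ‖f s - g s‖ := h1
      _ ≤ (Mprod + Kc ^ 2) * ‖z‖ ^ 2 * (‖x - y‖ * Real.exp (Kc * ‖z‖)) :=
          mul_le_mul_of_nonneg_left h2 h3
      _ = C := by rw [hC]; ring
  -- the function kd s = c (f s) z - c (g s) z
  have hkd : ∀ u ∈ Icc (0:ℝ) 1, HasDerivWithinAt (fun s => c (f s) z - c (g s) z)
      (bb c (f u) z - bb c (g u) z) (Icc 0 1) u := fun u hu =>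
    ((flow_chain hc hf u hu).sub (flow_chain hc hg u hu))
  have hk : ∀ u ∈ Icc (0:ℝ) 1,
      ‖(c (f u) z - c (g u) z) - (c x z - c y z)‖ ≤ C := by
    intro u hu
    have h := norm_image_sub_le_of_norm_deriv_le_segment'
      (f := fun s => c (f s) z - c (g s) z) (f' := fun s => bb c (f s) z - bb c (g s) z)
      hkd (fun s hs => hbb s (Ico_subset_Icc_self hs)) u hu
    simp only [hf0, hg0] at h
    calc ‖(c (f u) z - c (g u) z) - (c x z - c y z)‖ ≤ C * (u - 0) := h
      _ ≤ C := by nlinarith [hu.1, hu.2]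
  -- conclude via H u = (f u - x - u • c x z) - (g u - y - u • c y z)
  have hH : ∀ u ∈ Icc (0:ℝ) 1, HasDerivWithinAt
      (fun u => (f u - x - u • (c x z)) - (g u - y - u • (c y z)))
      ((c (f u) z - c (g u) z) - (c x z - c y z)) (Icc 0 1) u := by
    intro u hu
    have hsm1 : HasDerivAt (fun u : ℝ => u • (c x z)) (c x z) u := by
      simpa using (hasDerivAt_id u).smul_const (c x z)
    have hsm2 : HasDerivAt (fun u : ℝ => u • (c y z)) (c y z) u := by
      simpa using (hasDerivAt_id u).smul_const (c y z)
    have h1 := ((hf u hu).sub_const x).sub hsm1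
    have h2 := ((hg u hu).sub_const y).sub hsm2
    have h := h1.sub h2
    have he : c (f u) z - c x z - (c (g u) z - c y z)
        = (c (f u) z - c (g u) z) - (c x z - c y z) := by abel
    rw [he] at h
    exact h.hasDerivWithinAt
  have h := norm_image_sub_le_of_norm_deriv_le_segment_01'
    (f := fun u => (f u - x - u • (c x z)) - (g u - y - u • (c y z)))
    (f' := fun u => (c (f u) z - c (g u) z) - (c x z - c y z))
    hH (fun u hu => hk u (Ico_subset_Icc_self hu))
  simpa [hf0, hg0] using h

/-- Continuity-type estimate in `z`. -/
lemma est_z (hc : ContDiff ℝ 2 c) (hKc : 0 ≤ Kc)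
    (hDc : ∀ x z, ‖fderiv ℝ (fun y => c y z) x‖ ≤ Kc * ‖z‖)
    {x : E} {z z₀ : F} {f g : ℝ → E} (hf0 : f 0 = x) (hg0 : g 0 = x)
    (hf : ∀ u ∈ Icc (0:ℝ) 1, HasDerivAt f (c (f u) z) u)
    (hg : ∀ u ∈ Icc (0:ℝ) 1, HasDerivAt g (c (g u) z₀) u) :
    ‖f 1 - g 1‖ ≤ (‖c x‖ + Kc * (‖c x‖ * ‖z₀‖ * Real.exp (Kc * ‖z₀‖)))
      * ‖z - z₀‖ * Real.exp (Kc * ‖z‖) := by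
  set C₀ : ℝ := ‖c x‖ + Kc * (‖c x‖ * ‖z₀‖ * Real.exp (Kc * ‖z₀‖)) with hC₀
  have hC₀0 : 0 ≤ C₀ := by positivity
  have hcg : ∀ s ∈ Icc (0:ℝ) 1, ‖c (g s)‖ ≤ C₀ := by
    intro s hs
    have h3 : ‖c (g s) - c x‖ ≤ Kc * ‖g s - x‖ := cLip hc hKc hDc (g s) x
    have h4 := flow_disp hc hKc hDc hg0 hg s hs
    have h5 : ‖c (g s)‖ ≤ ‖c (g s) - c x‖ + ‖c x‖ := by
      simpa using norm_add_le (c (g s) - c x) (c x)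
    have := mul_le_mul_of_nonneg_left h4 hKc
    rw [hC₀]; linarith
  have hcont : ContinuousOn (fun s => f s - g s) (Icc 0 1) := fun u hu =>
    (((hf u hu).sub (hg u hu)).continuousAt).continuousWithinAt
  have hder : ∀ u ∈ Ico (0:ℝ) 1, HasDerivWithinAt (fun s => f s - g s)
      (c (f u) z - c (g u) z₀) (Ici u) u := fun u hu =>
    (((hf u (Ico_subset_Icc_self hu)).sub (hg u (Ico_subset_Icc_self hu)))).hasDerivWithinAt
  have hbound : ∀ u ∈ Ico (0:ℝ) 1,
      ‖c (f u) z - c (g u) z₀‖ ≤ Kc * ‖z‖ * ‖f u - g u‖ + C₀ * ‖z - z₀‖ := by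
    intro u hu
    have h1 : c (f u) z - c (g u) z₀ =
        (c (f u) z - c (g u) z) + (c (g u)) (z - z₀) := by
      rw [map_sub]; abel
    have h2 := cLipz hc hKc hDc (f u) (g u) z
    have h3 : ‖(c (g u)) (z - z₀)‖ ≤ C₀ * ‖z - z₀‖ :=
      le_trans ((c (g u)).le_opNorm (z - z₀))
        (mul_le_mul_of_nonneg_right (hcg u (Ico_subset_Icc_self hu)) (norm_nonneg _))
    calc ‖c (f u) z - c (g u) z₀‖
        ≤ ‖c (f u) z - c (g u) z‖ + ‖(c (g u)) (z - z₀)‖ := by rw [h1]; exact norm_add_le _ _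
      _ ≤ Kc * ‖z‖ * ‖f u - g u‖ + C₀ * ‖z - z₀‖ := add_le_add h2 h3
  have h0 : ‖f 0 - g 0‖ ≤ 0 := by simp [hf0, hg0]
  have H := norm_le_gronwallBound_of_norm_deriv_right_le hcont hder h0 hbound
  have h := H 1 (right_mem_Icc.2 zero_le_one)
  have h2 := gb_le' (K := Kc * ‖z‖) (eps := C₀ * ‖z - z₀‖) (t := (1:ℝ) - 0)
    (by positivity) (by positivity) (by norm_num) (by norm_num)
  calc ‖f 1 - g 1‖ ≤ gronwallBound 0 (Kc * ‖z‖) (C₀ * ‖z - z₀‖) (1 - 0) := h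
    _ ≤ C₀ * ‖z - z₀‖ * Real.exp (Kc * ‖z‖) := h2
    _ = C₀ * ‖z - z₀‖ * Real.exp (Kc * ‖z‖) := rfl

end Est

open scoped ENNReal

set_option maxHeartbeats 2000000 in
theorem stmt12 (d m : ℕ)
    (c : EuclideanSpace ℝ (Fin d) → (EuclideanSpace ℝ (Fin m) →L[ℝ] EuclideanSpace ℝ (Fin d)))
    (hc : ContDiff ℝ 2 c)
    (Kc : ℝ) (hKc : 0 ≤ Kc)
    (hDc : ∀ x z, ‖fderiv ℝ (fun y => c y z) x‖ ≤ Kc * ‖z‖)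
    (Mprod : ℝ) (hMprod : ∀ x, ‖c x‖ * ‖iteratedFDeriv ℝ 2 c x‖ ≤ Mprod)
    (φ : EuclideanSpace ℝ (Fin m) → ℝ → EuclideanSpace ℝ (Fin d) → EuclideanSpace ℝ (Fin d))
    (hφ0 : ∀ z x, φ z 0 x = x)
    (hφ : ∀ z x, ∀ u ∈ Icc (0:ℝ) 1, HasDerivAt (fun v => φ z v x) (c (φ z u x) z) u)
    (ν : Measure (EuclideanSpace ℝ (Fin m))) (hν0 : ν {0} = 0)
    (ε : ℝ) (hε : 0 < ε)
    (h_small : ∫⁻ z in {z : EuclideanSpace ℝ (Fin m) | 0 < ‖z‖ ∧ ‖z‖ ≤ 1},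
        ENNReal.ofReal (‖z‖ ^ 2) ∂ν ≠ ⊤)
    (h_big : ∫⁻ z in {z : EuclideanSpace ℝ (Fin m) | 1 < ‖z‖},
        ENNReal.ofReal (exp ((Kc + ε) * ‖z‖)) ∂ν ≠ ⊤) :
    (∀ x, Integrable (fun z => φ z 1 x - x - c x z) ν) ∧
    ∃ L ≥ 0, ∀ x y,
      ‖(∫ z, (φ z 1 x - x - c x z) ∂ν) - ∫ z, (φ z 1 y - y - c y z) ∂ν‖ ≤ L * ‖x - y‖ := by
  classical
  have hM0 : 0 ≤ Mprod := le_trans (by positivity) (hMprod 0)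
  -- continuity in z of the flow map
  have hψcont : ∀ x, Continuous (fun z => φ z 1 x) := by
    intro x
    rw [continuous_iff_continuousAt]
    intro z₀
    set C₀ : ℝ := ‖c x‖ + Kc * (‖c x‖ * ‖z₀‖ * exp (Kc * ‖z₀‖)) with hC₀
    have hb : ∀ z, ‖φ z 1 x - φ z₀ 1 x‖ ≤ C₀ * ‖z - z₀‖ * exp (Kc * ‖z‖) := fun z =>
      est_z (f := fun v => φ z v x) (g := fun v => φ z₀ v x)
        hc hKc hDc (hφ0 z x) (hφ0 z₀ x) (hφ z x) (hφ z₀ x)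
    have hgc : Continuous fun z : EuclideanSpace ℝ (Fin m) =>
        C₀ * ‖z - z₀‖ * exp (Kc * ‖z‖) :=
      ((continuous_const.mul ((continuous_id.sub continuous_const).norm)).mul
        (Real.continuous_exp.comp (continuous_const.mul continuous_norm)))
    have hg0 : Tendsto (fun z : EuclideanSpace ℝ (Fin m) =>
        C₀ * ‖z - z₀‖ * exp (Kc * ‖z‖)) (𝓝 z₀) (𝓝 0) := by
      have := hgc.tendsto z₀
      simpa using this
    unfold ContinuousAt
    rw [tendsto_iff_norm_sub_tendsto_zero]
    exact squeeze_zero (fun z => norm_nonneg _) hb hg0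
  have hgcont : ∀ x, Continuous (fun z => φ z 1 x - x - c x z) := fun x =>
    ((hψcont x).sub continuous_const).sub (c x).continuous
  -- the dominating weight
  set W : EuclideanSpace ℝ (Fin m) → ℝ := fun z => ‖z‖ ^ 2 * (1 + ‖z‖) * exp (Kc * ‖z‖)
    with hWdef
  have hWc : Continuous W :=
    ((continuous_norm.pow 2).mul (continuous_const.add continuous_norm)).mul
      (Real.continuous_exp.comp (continuous_const.mul continuous_norm))
  have hWnn : ∀ z, 0 ≤ W z := fun z => by
    have := norm_nonneg z; positivity
  have hWint : Integrable W ν := by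
    refine ⟨hWc.aestronglyMeasurable, ?_⟩
    rw [hasFiniteIntegral_iff_ofReal (Filter.Eventually.of_forall hWnn)]
    set S1 : Set (EuclideanSpace ℝ (Fin m)) := {z | 0 < ‖z‖ ∧ ‖z‖ ≤ 1} with hS1
    set S2 : Set (EuclideanSpace ℝ (Fin m)) := {z | 1 < ‖z‖} with hS2
    have hSu : ({(0 : EuclideanSpace ℝ (Fin m))} : Set _) ∪ (S1 ∪ S2) = univ := by
      ext z
      simp only [mem_union, mem_singleton_iff, hS1, hS2, mem_setOf_eq, mem_univ, iff_true]
      rcases eq_or_ne z 0 with h | h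
      · exact Or.inl h
      · have hz : 0 < ‖z‖ := norm_pos_iff.2 h
        rcases le_or_gt ‖z‖ 1 with h1 | h1
        · exact Or.inr (Or.inl ⟨hz, h1⟩)
        · exact Or.inr (Or.inr h1)
    have h0 : ∫⁻ z in ({(0 : EuclideanSpace ℝ (Fin m))} : Set _),
        ENNReal.ofReal (W z) ∂ν = 0 := setLIntegral_measure_zero _ _ hν0
    have h1 : ∫⁻ z in S1, ENNReal.ofReal (W z) ∂ν < ⊤ := by
      have hmeas : Measurable fun z : EuclideanSpace ℝ (Fin m) =>
          ENNReal.ofReal (‖z‖ ^ 2) :=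
        ENNReal.measurable_ofReal.comp ((continuous_norm.pow 2).measurable)
      have hle : ∀ z ∈ S1, ENNReal.ofReal (W z) ≤
          ENNReal.ofReal (2 * exp Kc) * ENNReal.ofReal (‖z‖ ^ 2) := by
        intro z hz
        obtain ⟨hz0, hz1⟩ := hz
        rw [← ENNReal.ofReal_mul (by positivity)]
        apply ENNReal.ofReal_le_ofReal
        have he : exp (Kc * ‖z‖) ≤ exp Kc := exp_le_exp.2 (by nlinarith)
        have hep : 0 < exp (Kc * ‖z‖) := exp_pos _
        have h1 : ‖z‖ ^ 2 * (1 + ‖z‖) ≤ 2 * ‖z‖ ^ 2 := by nlinarith [sq_nonneg ‖z‖]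
        calc ‖z‖ ^ 2 * (1 + ‖z‖) * exp (Kc * ‖z‖)
            ≤ 2 * ‖z‖ ^ 2 * exp (Kc * ‖z‖) := mul_le_mul_of_nonneg_right h1 hep.le
          _ ≤ 2 * ‖z‖ ^ 2 * exp Kc := mul_le_mul_of_nonneg_left he (by positivity)
          _ = 2 * exp Kc * ‖z‖ ^ 2 := by ring
      calc ∫⁻ z in S1, ENNReal.ofReal (W z) ∂ν
          ≤ ∫⁻ z in S1, ENNReal.ofReal (2 * exp Kc) * ENNReal.ofReal (‖z‖ ^ 2) ∂ν :=
            setLIntegral_mono (measurable_const.mul hmeas) hle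
        _ = ENNReal.ofReal (2 * exp Kc) * ∫⁻ z in S1, ENNReal.ofReal (‖z‖ ^ 2) ∂ν :=
            lintegral_const_mul _ hmeas
        _ < ⊤ := ENNReal.mul_lt_top ENNReal.ofReal_lt_top h_small.lt_top
    have h2 : ∫⁻ z in S2, ENNReal.ofReal (W z) ∂ν < ⊤ := by
      set Cε : ℝ := 2 / ε ^ 2 + 6 / ε ^ 3 with hCε
      have hCε0 : 0 ≤ Cε := by positivity
      have hmeas : Measurable fun z : EuclideanSpace ℝ (Fin m) =>
          ENNReal.ofReal (exp ((Kc + ε) * ‖z‖)) :=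
        ENNReal.measurable_ofReal.comp
          ((Real.continuous_exp.comp (continuous_const.mul continuous_norm)).measurable)
      have hle : ∀ z ∈ S2, ENNReal.ofReal (W z) ≤
          ENNReal.ofReal Cε * ENNReal.ofReal (exp ((Kc + ε) * ‖z‖)) := by
        intro z _
        rw [← ENNReal.ofReal_mul hCε0]
        apply ENNReal.ofReal_le_ofReal
        have hr : (0:ℝ) ≤ ‖z‖ := norm_nonneg z
        have p2 : ‖z‖ ^ 2 ≤ 2 / ε ^ 2 * exp (ε * ‖z‖) := by
          have h := poly_exp (n := 2) hε hr
          norm_num [Nat.factorial] at h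
          linarith
        have p3 : ‖z‖ ^ 3 ≤ 6 / ε ^ 3 * exp (ε * ‖z‖) := by
          have h := poly_exp (n := 3) hε hr
          norm_num [Nat.factorial] at h
          linarith
        have he : exp (ε * ‖z‖) * exp (Kc * ‖z‖) = exp ((Kc + ε) * ‖z‖) := by
          rw [← Real.exp_add]; ring_nf
        have hep : (0:ℝ) < exp (Kc * ‖z‖) := exp_pos _
        have hh2 := mul_le_mul_of_nonneg_right p2 hep.le
        have hh3 := mul_le_mul_of_nonneg_right p3 hep.le
        calc W z = (‖z‖ ^ 2 + ‖z‖ ^ 3) * exp (Kc * ‖z‖) := by rw [hWdef]; ring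
          _ ≤ (2 / ε ^ 2 * exp (ε * ‖z‖) + 6 / ε ^ 3 * exp (ε * ‖z‖)) * exp (Kc * ‖z‖) := by
              nlinarith
          _ = Cε * (exp (ε * ‖z‖) * exp (Kc * ‖z‖)) := by rw [hCε]; ring
          _ = Cε * exp ((Kc + ε) * ‖z‖) := by rw [he]
      calc ∫⁻ z in S2, ENNReal.ofReal (W z) ∂ν
          ≤ ∫⁻ z in S2, ENNReal.ofReal Cε * ENNReal.ofReal (exp ((Kc + ε) * ‖z‖)) ∂ν :=
            setLIntegral_mono (measurable_const.mul hmeas) hle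
        _ = ENNReal.ofReal Cε * ∫⁻ z in S2, ENNReal.ofReal (exp ((Kc + ε) * ‖z‖)) ∂ν :=
            lintegral_const_mul _ hmeas
        _ < ⊤ := ENNReal.mul_lt_top ENNReal.ofReal_lt_top h_big.lt_top
    calc ∫⁻ z, ENNReal.ofReal (W z) ∂ν
        = ∫⁻ z in ({(0 : EuclideanSpace ℝ (Fin m))} : Set _) ∪ (S1 ∪ S2),
            ENNReal.ofReal (W z) ∂ν := by rw [hSu, Measure.restrict_univ]
      _ ≤ (∫⁻ z in ({(0 : EuclideanSpace ℝ (Fin m))} : Set _), ENNReal.ofReal (W z) ∂ν) +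
          ∫⁻ z in S1 ∪ S2, ENNReal.ofReal (W z) ∂ν := lintegral_union_le _ _ _
      _ ≤ (∫⁻ z in ({(0 : EuclideanSpace ℝ (Fin m))} : Set _), ENNReal.ofReal (W z) ∂ν) +
          ((∫⁻ z in S1, ENNReal.ofReal (W z) ∂ν) + ∫⁻ z in S2, ENNReal.ofReal (W z) ∂ν) :=
            add_le_add le_rfl (lintegral_union_le _ _ _)
      _ < ⊤ := by
          rw [h0, zero_add]
          exact ENNReal.add_lt_top.2 ⟨h1, h2⟩
  -- integrability of the integrand
  have hInt : ∀ x, Integrable (fun z => φ z 1 x - x - c x z) ν := by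
    intro x
    refine (hWint.const_mul (Kc * ‖c x‖ * (1 + Kc))).mono' (hgcont x).aestronglyMeasurable
      (Filter.Eventually.of_forall fun z => ?_)
    have h1 := est_one (f := fun v => φ z v x) hc hKc hDc (hφ0 z x) (hφ z x)
    refine h1.trans ?_
    have he1 : (1:ℝ) ≤ exp (Kc * ‖z‖) := one_le_exp (by positivity)
    have hr : (0:ℝ) ≤ ‖z‖ := norm_nonneg z
    have ha : (0:ℝ) ≤ ‖c x‖ := norm_nonneg _
    have hh1 : (0:ℝ) ≤ Kc * ‖c x‖ * ‖z‖ ^ 2 * (exp (Kc * ‖z‖) - 1) := by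
      apply mul_nonneg (by positivity); linarith
    have hh2 : (0:ℝ) ≤ Kc ^ 2 * ‖c x‖ * ‖z‖ ^ 2 * exp (Kc * ‖z‖) := by positivity
    have hh3 : (0:ℝ) ≤ Kc * ‖c x‖ * ‖z‖ ^ 3 * exp (Kc * ‖z‖) := by positivity
    have hh4 : (0:ℝ) ≤ Kc ^ 2 * ‖c x‖ * ‖z‖ ^ 3 * exp (Kc * ‖z‖) := by positivity
    show Kc * ‖z‖ ^ 2 * (‖c x‖ + Kc * (‖c x‖ * ‖z‖ * exp (Kc * ‖z‖))) ≤
      Kc * ‖c x‖ * (1 + Kc) * (‖z‖ ^ 2 * (1 + ‖z‖) * exp (Kc * ‖z‖))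
    nlinarith [hh1, hh2, hh3, hh4]
  refine ⟨hInt, ?_⟩
  -- the Lipschitz constant
  set rho : EuclideanSpace ℝ (Fin m) → ℝ :=
    fun z => (Mprod + Kc ^ 2) * (‖z‖ ^ 2 * exp (Kc * ‖z‖)) with hrhodef
  have hrhoc : Continuous rho :=
    continuous_const.mul ((continuous_norm.pow 2).mul
      (Real.continuous_exp.comp (continuous_const.mul continuous_norm)))
  have hrhoint : Integrable rho ν := by
    refine (hWint.const_mul (Mprod + Kc ^ 2)).mono' hrhoc.aestronglyMeasurable
      (Filter.Eventually.of_forall fun z => ?_)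
    have hr : (0:ℝ) ≤ ‖z‖ := norm_nonneg z
    have he : (0:ℝ) < exp (Kc * ‖z‖) := exp_pos _
    rw [Real.norm_eq_abs, abs_of_nonneg (by positivity)]
    show (Mprod + Kc ^ 2) * (‖z‖ ^ 2 * exp (Kc * ‖z‖)) ≤
      (Mprod + Kc ^ 2) * (‖z‖ ^ 2 * (1 + ‖z‖) * exp (Kc * ‖z‖))
    have h : ‖z‖ ^ 2 * exp (Kc * ‖z‖) ≤ ‖z‖ ^ 2 * (1 + ‖z‖) * exp (Kc * ‖z‖) := by
      nlinarith [mul_nonneg (mul_nonneg hr (sq_nonneg ‖z‖)) he.le]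
    exact mul_le_mul_of_nonneg_left h (by positivity)
  refine ⟨∫ z, rho z ∂ν, integral_nonneg (fun z => by positivity), fun x y => ?_⟩
  rw [← integral_sub (hInt x) (hInt y)]
  calc ‖∫ z, (φ z 1 x - x - c x z - (φ z 1 y - y - c y z)) ∂ν‖
      ≤ ∫ z, ‖φ z 1 x - x - c x z - (φ z 1 y - y - c y z)‖ ∂ν :=
        norm_integral_le_integral_norm _
    _ ≤ ∫ z, rho z * ‖x - y‖ ∂ν := by
        refine integral_mono ((hInt x).sub (hInt y)).norm (hrhoint.mul_const _) fun z => ?_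
        have h := est_two (f := fun v => φ z v x) (g := fun v => φ z v y)
          hc hKc hDc hMprod (hφ0 z x) (hφ0 z y) (hφ z x) (hφ z y)
        simpa [hrhodef] using h
    _ = (∫ z, rho z ∂ν) * ‖x - y‖ := integral_mul_const _ _
end
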